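/- Consider a family of queues indexed by column j = 1, ..., n-1, where a queue in column j receives arrivals only in slots when its value is below twice the bound of column j-1 queues plus nothing, and at most 2 packets arrive per slot; formally, suppose nonnegative sequences satisfy: if Q_j(t) ≥ 2·B_{j-1} then Q_j receives no arrivals at time t, Q_j(t+1) ≤ Q_j(t) + 2 otherwise (with no decrease assumed), and Q_j(0) = 0, with B_0 given. Then Q_j(t) ≤ B_j for all t, where B_j is defined recursively by B_j = 2·B_{j-1} + 2, so B_j = 2^j·B_0 + ∑_{l=1}^{j} 2^l. -/
import Mathlib


/-- Backpressure queue-bound propagation: a column-`j` queue receives arrivals (at most 2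
per slot) only when below `2·B_{j-1}`; hence `Q_j t ≤ B_j` where `B_j = 2 B_{j-1} + 2`,
i.e. `B_j = 2^j B_0 + ∑_{l=1}^j 2^l`. -/
theorem stmt_12 (B₀ : ℝ) (hB₀ : 0 ≤ B₀) (B : ℕ → ℝ) (Q : ℕ → ℕ → ℝ)
    (hB0 : B 0 = B₀)
    (hBrec : ∀ j, B (j + 1) = 2 * B j + 2)
    (hQpos : ∀ j t, 0 ≤ Q j t)
    (hQ0 : ∀ j, Q j 0 = 0)
    (hnoarr : ∀ j t, 1 ≤ j → Q j t ≥ 2 * B (j - 1) → Q j (t + 1) ≤ Q j t)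
    (harr : ∀ j t, Q j (t + 1) ≤ Q j t + 2) :
    (∀ j t, 1 ≤ j → Q j t ≤ B j) ∧
    (∀ j, B j = 2 ^ j * B₀ + ∑ l ∈ Finset.Icc 1 j, (2 : ℝ) ^ l) := by
  have hBnonneg : ∀ j, 0 ≤ B j := by
    intro j
    induction j with
    | zero => rw [hB0]; exact hB₀
    | succ k ih => rw [hBrec]; linarith
  constructor
  · intro j t hj
    induction t with
    | zero =>
      rw [hQ0]
      exact hBnonneg j
    | succ t ih =>
      obtain ⟨k, rfl⟩ : ∃ k, j = k + 1 := ⟨j - 1, (Nat.succ_pred_eq_of_pos hj).symm⟩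
      by_cases h : Q (k + 1) t ≥ 2 * B k
      · have := hnoarr (k + 1) t hj (by simpa using h)
        linarith
      · push_neg at h
        have := harr (k + 1) t
        rw [hBrec]
        linarith
  · have hsum : ∀ k : ℕ, ∑ l ∈ Finset.Icc 1 k, (2 : ℝ) ^ l = 2 ^ (k + 1) - 2 := by
      intro k
      induction k with
      | zero => simp
      | succ m ih =>
        rw [Finset.sum_Icc_succ_top (by omega : 1 ≤ m + 1), ih]
        ring
    intro j
    induction j with
    | zero => simp [hB0]
    | succ k ih =>
      rw [hBrec, ih, hsum k, hsum (k + 1)]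
      ring
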